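/- Let λ₁, c > 0, and let φ : (−∞,0] → [0,∞) be absolutely continuous with φ'(t) + h(t) ≤ c g(t) φ(t) + 2 F(t) for a.e. t ≤ 0, where h, g, F ≥ 0, g, F ∈ L¹(−∞,0), and suppose there is a sequence s_n ↓ −∞ with φ(s_n) → 0. Then for all t ≤ 0: φ(t) ≤ 2 ∫_{−∞}^t F(r) exp(c∫_r^t g(ρ)dρ) dr, and in particular sup_{t≤0} φ(t) ≤ 2 e^{c|g|_{L¹}} |F|_{L¹} and lim_{t→−∞} φ(t) = 0. -/

import Mathlib

/-!
Multiplying by the integrating factor `E r = exp (∫ ρ in r..t, β ρ)` turns `φ' ≤ β φ + γ` into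
`(φ E)' ≤ γ E` almost everywhere. The product `φ E` is absolutely continuous: `E` is a locally
Lipschitz function of a primitive, and `φ` differs from a primitive of its integrable upper bound
by a monotone function, so its derivative is integrable. Integrating over `[s, t]` gives the
Gronwall bound; along `s = s n → -∞` the boundary term `φ (s n) E (s n)` vanishes because `E` stays
below `exp (∫ β)`.
-/

open MeasureTheory Filter Set Topology

namespace AbsolutelyContinuousOnInterval

theorem congr {X : Type*} [PseudoMetricSpace X] {f g : ℝ → X} {a b : ℝ}
    (hf : AbsolutelyContinuousOnInterval f a b) (h : EqOn f g (uIcc a b)) :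
    AbsolutelyContinuousOnInterval g a b := by
  refine hf.congr' (eventually_inf_principal.2 (Eventually.of_forall fun E hE => ?_))
  exact Finset.sum_congr rfl fun i hi => by rw [h (hE.1 i hi).1, h (hE.1 i hi).2]

end AbsolutelyContinuousOnInterval

theorem LipschitzOnWith.comp_absolutelyContinuousOnInterval {X Y : Type*} [PseudoMetricSpace X]
    [PseudoMetricSpace Y] {f : ℝ → X} {h : X → Y} {K : NNReal} {s : Set X} {a b : ℝ}
    (hh : LipschitzOnWith K h s) (hf : AbsolutelyContinuousOnInterval f a b)
    (hfs : MapsTo f (uIcc a b) s) : AbsolutelyContinuousOnInterval (fun x => h (f x)) a b := by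
  have hK := Tendsto.const_mul (K : ℝ) hf
  rw [mul_zero] at hK
  refine squeeze_zero' (Eventually.of_forall fun E => Finset.sum_nonneg fun i _ => dist_nonneg)
    (eventually_inf_principal.2 (Eventually.of_forall fun E hE => ?_)) hK
  rw [Finset.mul_sum]
  exact Finset.sum_le_sum fun i hi =>
    hh.dist_le_mul _ (hfs (hE.1 i hi).1) _ (hfs (hE.1 i hi).2)

theorem LocallyLipschitz.comp_absolutelyContinuousOnInterval {X Y : Type*}
    [SeminormedAddCommGroup X] [PseudoMetricSpace Y] {f : ℝ → X} {h : X → Y} {a b : ℝ}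
    (hh : LocallyLipschitz h) (hf : AbsolutelyContinuousOnInterval f a b) :
    AbsolutelyContinuousOnInterval (fun x => h (f x)) a b := by
  have hcpt : IsCompact (f '' uIcc a b) := isCompact_uIcc.image_of_continuousOn hf.continuousOn
  obtain ⟨K, hK⟩ :=
    (hh.locallyLipschitzOn (s := f '' uIcc a b)).exists_lipschitzOnWith_of_compact hcpt
  exact hK.comp_absolutelyContinuousOnInterval hf (mapsTo_image f _)

section DerivLe

variable {f u : ℝ → ℝ} {a b : ℝ}

theorem sub_le_integral_of_deriv_le_ae (hab : a ≤ b) (hf : ∀ x ∈ Icc a b, DifferentiableAt ℝ f x)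
    (hu : IntegrableOn u (Icc a b)) (hle : ∀ᵐ x ∂volume.restrict (Icc a b), deriv f x ≤ u x) :
    f b - f a ≤ ∫ x in a..b, u x := by
  -- `max (u x) (deriv f x)` bounds `deriv f` everywhere and agrees with `u` almost everywhere
  have heq : u =ᵐ[volume.restrict (Icc a b)] fun x => max (u x) (deriv f x) :=
    hle.mono fun x hx => (max_eq_left hx).symm
  calc f b - f a ≤ ∫ x in a..b, max (u x) (deriv f x) :=
        intervalIntegral.sub_le_integral_of_hasDeriv_right_of_le hab
          (fun x hx => (hf x hx).continuousAt.continuousWithinAt)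
          (fun x hx => (hf x (Ioo_subset_Icc_self hx)).hasDerivAt.hasDerivWithinAt)
          (hu.congr heq) (fun x _ => le_max_right _ _)
    _ = ∫ x in a..b, u x := by
        rw [intervalIntegral.integral_of_le hab, intervalIntegral.integral_of_le hab]
        exact integral_congr_ae
          (ae_restrict_of_ae_restrict_of_subset Ioc_subset_Icc_self heq.symm)

theorem monotoneOn_integral_sub_of_deriv_le_ae (hf : ∀ x ∈ Icc a b, DifferentiableAt ℝ f x)
    (hu : IntegrableOn u (Icc a b)) (hle : ∀ᵐ x ∂volume.restrict (Icc a b), deriv f x ≤ u x) :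
    MonotoneOn (fun x => (∫ y in a..x, u y) - f x) (Icc a b) := by
  intro x hx y hy hxy
  have hsub : Icc x y ⊆ Icc a b := Icc_subset_Icc hx.1 hy.2
  have hfxy := sub_le_integral_of_deriv_le_ae hxy (fun z hz => hf z (hsub hz)) (hu.mono_set hsub)
    (ae_restrict_of_ae_restrict_of_subset hsub hle)
  have hint : ∀ z ∈ Icc a b, IntervalIntegrable u volume a z := fun z hz =>
    (intervalIntegrable_iff_integrableOn_Icc_of_le hz.1).2 (hu.mono_set (Icc_subset_Icc_right hz.2))
  have := intervalIntegral.integral_interval_sub_left (hint y hy) (hint x hx)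
  dsimp only
  linarith

theorem absolutelyContinuousOnInterval_of_deriv_le_ae (hab : a ≤ b)
    (hf : ∀ x ∈ Icc a b, DifferentiableAt ℝ f x) (hu : IntegrableOn u (Icc a b))
    (hle : ∀ᵐ x ∂volume.restrict (Icc a b), deriv f x ≤ u x) :
    AbsolutelyContinuousOnInterval f a b := by
  set χ := fun x => (∫ y in a..x, u y) - f x
  have huII : IntervalIntegrable u volume a b :=
    (intervalIntegrable_iff_integrableOn_Icc_of_le hab).2 hu
  have hχ : MonotoneOn χ (uIcc a b) := by
    rw [uIcc_of_le hab]; exact monotoneOn_integral_sub_of_deriv_le_ae hf hu hle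
  have hderiv : IntervalIntegrable (deriv f) volume a b := by
    refine (huII.sub hχ.intervalIntegrable_deriv).congr_ae ?_
    rw [EventuallyEq, ae_restrict_iff' measurableSet_uIoc]
    filter_upwards [huII.ae_hasDerivAt_integral] with x hx hxI
    have hxI' : x ∈ uIcc a b := uIoc_subset_uIcc hxI
    have hP := hx hxI' a left_mem_uIcc
    have hχx : HasDerivAt χ (u x - deriv f x) x :=
      hP.fun_sub (hf x (by rwa [uIcc_of_le hab] at hxI')).hasDerivAt
    rw [hχx.deriv]
    ring
  have hFTC : EqOn (fun x => (∫ y in a..x, deriv f y) + f a) f (uIcc a b) := by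
    intro x hx
    rw [uIcc_of_le hab] at hx
    have hsub : uIcc a x ⊆ Icc a b := by rw [uIcc_of_le hx.1]; exact Icc_subset_Icc_right hx.2
    dsimp only
    rw [intervalIntegral.integral_eq_sub_of_hasDerivAt (fun y hy => (hf y (hsub hy)).hasDerivAt)
      (hderiv.mono_set (by rwa [uIcc_of_le hab]))]
    ring
  have hprim := hderiv.absolutelyContinuousOnInterval_intervalIntegral left_mem_uIcc
  exact AbsolutelyContinuousOnInterval.congr
    (by simpa [AbsolutelyContinuousOnInterval] using hprim) hFTC

end DerivLe

theorem le_mul_exp_integral_add_integral_of_deriv_le {φ β γ : ℝ → ℝ} {s t : ℝ} (hst : s ≤ t)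
    (hφ : ∀ x ∈ Icc s t, DifferentiableAt ℝ φ x) (hβ : IntegrableOn β (Icc s t))
    (hγ : IntegrableOn γ (Icc s t))
    (hle : ∀ᵐ x ∂volume.restrict (Icc s t), deriv φ x ≤ β x * φ x + γ x) :
    φ t ≤ φ s * Real.exp (∫ r in s..t, β r) + ∫ r in s..t, γ r * Real.exp (∫ ρ in r..t, β ρ) := by
  set E := fun r => Real.exp (∫ ρ in r..t, β ρ)
  have hβII : IntervalIntegrable β volume s t :=
    (intervalIntegrable_iff_integrableOn_Icc_of_le hst).2 hβ
  have hE_eq : E = fun r => Real.exp (-∫ ρ in t..r, β ρ) := by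
    ext r; simp only [E, intervalIntegral.integral_symm t r]
  have hφAC : AbsolutelyContinuousOnInterval φ s t :=
    absolutelyContinuousOnInterval_of_deriv_le_ae hst hφ
      ((hβ.mul_continuousOn (fun x hx => (hφ x hx).continuousAt.continuousWithinAt)
        isCompact_Icc).add hγ) hle
  have hEAC : AbsolutelyContinuousOnInterval E s t := by
    rw [hE_eq]
    exact LocallyLipschitz.comp_absolutelyContinuousOnInterval (h := Real.exp)
      Real.contDiff_exp.locallyLipschitz
      (hβII.absolutelyContinuousOnInterval_intervalIntegral right_mem_uIcc).fun_neg
  have hψAC := hφAC.fun_mul hEAC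
  have hderiv : ∀ᵐ x ∂volume.restrict (Icc s t),
      deriv (fun r => φ r * E r) x ≤ γ x * E x := by
    filter_upwards [hle, ae_restrict_of_ae hβII.ae_hasDerivAt_integral,
      ae_restrict_mem measurableSet_Icc] with x hx hI hxI
    have hxI' : x ∈ uIcc s t := by rwa [uIcc_of_le hst]
    have hE : HasDerivAt E (E x * -β x) x := by
      rw [hE_eq]; exact (hI hxI' t right_mem_uIcc).fun_neg.exp
    rw [((hφ x hxI).hasDerivAt.fun_mul hE).deriv]
    have := mul_le_mul_of_nonneg_right hx (Real.exp_pos (∫ ρ in x..t, β ρ)).le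
    linarith
  have hmono := intervalIntegral.integral_mono_ae_restrict hst hψAC.intervalIntegrable_deriv
    ((intervalIntegrable_iff_integrableOn_Icc_of_le hst).2
      (hγ.mul_continuousOn (uIcc_of_le hst ▸ hEAC.continuousOn) isCompact_Icc)) hderiv
  rw [hψAC.integral_deriv_eq_sub] at hmono
  simp only [E, intervalIntegral.integral_same, Real.exp_zero, mul_one] at hmono
  linarith

theorem intervalIntegral_le_integral_Iic {β : ℝ → ℝ} {r t b : ℝ} (hβ : ∀ x, 0 ≤ β x)
    (hβint : IntegrableOn β (Iic b)) (hrt : r ≤ t) (htb : t ≤ b) :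
    ∫ ρ in r..t, β ρ ≤ ∫ ρ in Iic b, β ρ := by
  rw [intervalIntegral.integral_of_le hrt]
  exact setIntegral_mono_set hβint (ae_of_all _ hβ)
    (Ioc_subset_Iic_self.trans (Iic_subset_Iic.2 htb)).eventuallyLE

theorem tendsto_setIntegral_Iic_atBot {f : ℝ → ℝ} {b : ℝ} (hf : IntegrableOn f (Iic b)) :
    Tendsto (fun t => ∫ x in Iic t, f x) atBot (𝓝 0) := by
  have hlim : Tendsto (fun t => (∫ x in Iic b, f x) - ∫ x in t..b, f x) atBot (𝓝 0) := by
    simpa using (tendsto_const_nhds (x := ∫ x in Iic b, f x)).sub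
      (intervalIntegral_tendsto_integral_Iic b hf tendsto_id)
  refine hlim.congr' ?_
  filter_upwards [eventually_le_atBot b] with t ht
  rw [← intervalIntegral.integral_Iic_sub_Iic (hf.mono_set (Iic_subset_Iic.2 ht)) hf]
  ring

theorem le_integral_Iic_mul_exp_of_deriv_le {φ β γ : ℝ → ℝ} {t : ℝ}
    (hφ : ∀ x ≤ t, DifferentiableAt ℝ φ x) (hβ : ∀ x, 0 ≤ β x) (hγ : ∀ x, 0 ≤ γ x)
    (hβint : IntegrableOn β (Iic t)) (hγint : IntegrableOn γ (Iic t))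
    (hle : ∀ᵐ x ∂volume.restrict (Iic t), deriv φ x ≤ β x * φ x + γ x)
    {s : ℕ → ℝ} (hs : Tendsto s atTop atBot) (hφs : Tendsto (fun n => φ (s n)) atTop (𝓝 0)) :
    φ t ≤ ∫ r in Iic t, γ r * Real.exp (∫ ρ in r..t, β ρ) := by
  set B := ∫ r in Iic t, β r
  have hanti : AntitoneOn (fun r => ∫ ρ in r..t, β ρ) (Iic t) := fun r hr r' hr' hrr' => by
    simp only [intervalIntegral.integral_of_le hr, intervalIntegral.integral_of_le hr']
    exact setIntegral_mono_set (hβint.mono_set Ioc_subset_Iic_self) (ae_of_all _ hβ)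
      (Ioc_subset_Ioc_left hrr').eventuallyLE
  have hbound : ∀ r ≤ t, ∫ ρ in r..t, β ρ ≤ B := fun r hr =>
    intervalIntegral_le_integral_Iic hβ hβint hr le_rfl
  have hint : IntegrableOn (fun r => γ r * Real.exp (∫ ρ in r..t, β ρ)) (Iic t) := by
    refine Integrable.mono' (hγint.mul_const (Real.exp B))
      (hγint.aestronglyMeasurable.mul (Real.continuous_exp.comp_aestronglyMeasurable
        (aemeasurable_restrict_of_antitoneOn measurableSet_Iic hanti).aestronglyMeasurable))
      (ae_restrict_of_forall_mem measurableSet_Iic fun r hr => ?_)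
    rw [Real.norm_of_nonneg (mul_nonneg (hγ r) (Real.exp_pos _).le)]
    exact mul_le_mul_of_nonneg_left (Real.exp_le_exp.2 (hbound r hr)) (hγ r)
  have hfin : ∀ᶠ n in atTop, φ t ≤ φ (s n) * Real.exp (∫ ρ in s n..t, β ρ) +
      ∫ r in Iic t, γ r * Real.exp (∫ ρ in r..t, β ρ) := by
    filter_upwards [hs.eventually (eventually_le_atBot t)] with n hn
    have hsub : Icc (s n) t ⊆ Iic t := Icc_subset_Iic_self
    refine (le_mul_exp_integral_add_integral_of_deriv_le hn (fun x hx => hφ x hx.2)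
      (hβint.mono_set hsub) (hγint.mono_set hsub)
      (ae_restrict_of_ae_restrict_of_subset hsub hle)).trans (add_le_add_right ?_ _)
    rw [intervalIntegral.integral_of_le hn]
    exact setIntegral_mono_set hint (ae_of_all _ fun r => mul_nonneg (hγ r) (Real.exp_pos _).le)
      Ioc_subset_Iic_self.eventuallyLE
  have htend : Tendsto (fun n => φ (s n) * Real.exp (∫ ρ in s n..t, β ρ)) atTop (𝓝 0) := by
    refine squeeze_zero_norm' ?_ (by simpa using hφs.norm.mul_const (Real.exp B))
    filter_upwards [hs.eventually (eventually_le_atBot t)] with n hn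
    rw [norm_mul, Real.norm_of_nonneg (Real.exp_pos _).le]
    exact mul_le_mul_of_nonneg_left (Real.exp_le_exp.2 (hbound _ hn)) (norm_nonneg _)
  exact ge_of_tendsto (by simpa using htend.add_const _) hfin

theorem stmt14_general (c : ℝ) (hc : 0 < c)
    (φ h g F : ℝ → ℝ)
    (hφpos : ∀ t ≤ (0 : ℝ), 0 ≤ φ t)
    (hφdiff : ∀ t ≤ (0 : ℝ), DifferentiableAt ℝ φ t)
    (hh : ∀ t, 0 ≤ h t) (hg : ∀ t, 0 ≤ g t) (hF : ∀ t, 0 ≤ F t)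
    (hgint : IntegrableOn g (Set.Iic 0))
    (hFint : IntegrableOn F (Set.Iic 0))
    (hineq : ∀ᵐ t ∂(volume.restrict (Set.Iic (0:ℝ))),
      deriv φ t + h t ≤ c * g t * φ t + 2 * F t)
    (s : ℕ → ℝ) (hs : Tendsto s atTop atBot)
    (hφs : Tendsto (fun n => φ (s n)) atTop (nhds 0)) :
    (∀ t ≤ (0 : ℝ),
        φ t ≤ 2 * ∫ r in Set.Iic t, F r * Real.exp (c * ∫ ρ in r..t, g ρ)) ∧
      (∀ t ≤ (0 : ℝ),
        φ t ≤ 2 * Real.exp (c * ∫ r in Set.Iic (0:ℝ), g r) * ∫ r in Set.Iic (0:ℝ), F r) ∧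
      Tendsto φ atBot (nhds 0) := by
  set G := ∫ r in Iic (0:ℝ), g r
  have hrep : ∀ t ≤ (0 : ℝ), φ t ≤ 2 * ∫ r in Iic t, F r * Real.exp (c * ∫ ρ in r..t, g ρ) := by
    intro t ht
    have hsub : Iic t ⊆ Iic 0 := Iic_subset_Iic.2 ht
    have := le_integral_Iic_mul_exp_of_deriv_le (β := fun x => c * g x) (γ := fun x => 2 * F x)
      (fun x hx => hφdiff x (hx.trans ht)) (fun x => mul_nonneg hc.le (hg x))
      (fun x => mul_nonneg zero_le_two (hF x)) ((hgint.mono_set hsub).const_mul c)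
      ((hFint.mono_set hsub).const_mul 2)
      (ae_restrict_of_ae_restrict_of_subset hsub (hineq.mono fun x hx => by linarith [hh x]))
      hs hφs
    simpa only [intervalIntegral.integral_const_mul, integral_const_mul, mul_assoc] using this
  have hsup : ∀ t ≤ (0 : ℝ), φ t ≤ 2 * Real.exp (c * G) * ∫ r in Iic t, F r := by
    intro t ht
    have hFt : IntegrableOn F (Iic t) := hFint.mono_set (Iic_subset_Iic.2 ht)
    have hexp : ∫ r in Iic t, F r * Real.exp (c * ∫ ρ in r..t, g ρ) ≤
        ∫ r in Iic t, F r * Real.exp (c * G) :=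
      integral_mono_of_nonneg (ae_of_all _ fun r => mul_nonneg (hF r) (Real.exp_pos _).le)
        (hFt.mul_const _) (ae_restrict_of_forall_mem measurableSet_Iic fun r hr =>
          mul_le_mul_of_nonneg_left (Real.exp_le_exp.2 (mul_le_mul_of_nonneg_left
            (intervalIntegral_le_integral_Iic hg hgint hr ht) hc.le)) (hF r))
    rw [integral_mul_const] at hexp
    linarith [hrep t ht]
  refine ⟨hrep, fun t ht => (hsup t ht).trans ?_, ?_⟩
  · exact mul_le_mul_of_nonneg_left (setIntegral_mono_set hFint (ae_of_all _ hF)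
      (Iic_subset_Iic.2 ht).eventuallyLE) (by positivity)
  · refine tendsto_of_tendsto_of_tendsto_of_le_of_le' tendsto_const_nhds
      (by simpa using (tendsto_setIntegral_Iic_atBot hFint).const_mul (2 * Real.exp (c * G)))
      ?_ ?_ <;> filter_upwards [eventually_le_atBot (0:ℝ)] with t ht
    exacts [hφpos t ht, hsup t ht]

/-- Abstract Gronwall lemma on the half-line `(−∞,0]`: if `φ ≥ 0` is differentiable
with `φ' + h ≤ c g φ + 2F` a.e. on `(−∞,0]`, where `h, g, F ≥ 0` and `g, F` are
integrable on `(−∞,0]`, and `φ(s_n) → 0` along a sequence `s_n ↓ −∞`, then for all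
`t ≤ 0`, `φ(t) ≤ 2∫_{−∞}^t F(r) e^{c∫_r^t g} dr`; in particular
`sup_{t≤0} φ(t) ≤ 2 e^{c|g|_{L¹}} |F|_{L¹}` and `φ(t) → 0` as `t → −∞`. -/
theorem stmt14 (lam1 c : ℝ) (hlam : 0 < lam1) (hc : 0 < c)
    (φ h g F : ℝ → ℝ)
    (hφpos : ∀ t ≤ (0 : ℝ), 0 ≤ φ t)
    (hφdiff : ∀ t ≤ (0 : ℝ), DifferentiableAt ℝ φ t)
    (hh : ∀ t, 0 ≤ h t) (hg : ∀ t, 0 ≤ g t) (hF : ∀ t, 0 ≤ F t)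
    (hgint : IntegrableOn g (Set.Iic 0))
    (hFint : IntegrableOn F (Set.Iic 0))
    (hineq : ∀ᵐ t ∂(volume.restrict (Set.Iic (0:ℝ))),
      deriv φ t + h t ≤ c * g t * φ t + 2 * F t)
    (s : ℕ → ℝ) (hs : Tendsto s atTop atBot)
    (hφs : Tendsto (fun n => φ (s n)) atTop (nhds 0)) :
    (∀ t ≤ (0 : ℝ),
        φ t ≤ 2 * ∫ r in Set.Iic t, F r * Real.exp (c * ∫ ρ in r..t, g ρ)) ∧
      (∀ t ≤ (0 : ℝ),
        φ t ≤ 2 * Real.exp (c * ∫ r in Set.Iic (0:ℝ), g r) * ∫ r in Set.Iic (0:ℝ), F r) ∧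
      Tendsto φ atBot (nhds 0) :=
  stmt14_general c hc φ h g F hφpos hφdiff hh hg hF hgint hFint hineq s hs hφs
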